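/- Let \widehat{M}_∞ denote the matricial ℓ¹-sum of the family (\widehat{M}_n)_{n∈ℕ}, with embeddings i_n : \widehat{M}_n → \widehat{M}_∞. Then for every matricially normed space E, the map sending a sequence w = (w_1, w_2, …) with w_n ∈ B_{M_n(E)} to the unique completely contractive operator φ^w : \widehat{M}_∞ → E satisfying φ^w ∘ i_n = φ^{w_n} for all n, is a bijection from the product Π_{n∈ℕ} B_{M_n(E)} onto the set of completely contractive operators from \widehat{M}_∞ to E. (Thus \widehat{M}_∞ is the metrically free matricially normed space with a one-point base.) -/

import Mathlib

open scoped BigOperators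
open Matrix

noncomputable section

/-- Block-diagonal sum `u ⊕ w` of two square matrices with entries in `E`. -/
def MatDSum {E : Type*} [Zero E] {m k : ℕ}
    (u : Matrix (Fin m) (Fin m) E) (w : Matrix (Fin k) (Fin k) E) :
    Matrix (Fin (m + k)) (Fin (m + k)) E :=
  Matrix.reindex finSumFinEquiv finSumFinEquiv (Matrix.fromBlocks u 0 0 w)

/-- Left action `S·u` of a scalar matrix on an `E`-valued matrix. -/
def scalLeft {E : Type*} [AddCommMonoid E] [Module ℂ E] {m : ℕ}
    (S : Matrix (Fin m) (Fin m) ℂ) (u : Matrix (Fin m) (Fin m) E) :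
    Matrix (Fin m) (Fin m) E :=
  Matrix.of fun i j => ∑ k, S i k • u k j

/-- Right action `u·S` of a scalar matrix on an `E`-valued matrix. -/
def scalRight {E : Type*} [AddCommMonoid E] [Module ℂ E] {m : ℕ}
    (u : Matrix (Fin m) (Fin m) E) (S : Matrix (Fin m) (Fin m) ℂ) :
    Matrix (Fin m) (Fin m) E :=
  Matrix.of fun i j => ∑ k, S k j • u i k

/-- The operator norm `‖S‖_o` of a complex scalar matrix, i.e. its norm as an
operator on the euclidean (Hilbert) space `ℂⁿ`. -/
noncomputable def opNorm {m : ℕ} (S : Matrix (Fin m) (Fin m) ℂ) : ℝ :=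
  ‖LinearMap.toContinuousLinearMap (Matrix.toEuclideanLin S)‖

/-- The `m`-th amplification of a map `φ : E → F`: apply `φ` entrywise. -/
def matAmpl {E F : Type*} (φ : E → F) {m : ℕ} (u : Matrix (Fin m) (Fin m) E) :
    Matrix (Fin m) (Fin m) F :=
  Matrix.of fun i j => φ (u i j)

/-- The operator `φ^v : M_n → E`, `(λ_{ij}) ↦ Σ_{i,j} λ_{ji} • x_{ij}`, associated with
`v = (x_{ij}) ∈ M_n(E)`. -/
def matPhi {E : Type*} [AddCommMonoid E] [Module ℂ E] {n : ℕ}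
    (v : Matrix (Fin n) (Fin n) E) (a : Matrix (Fin n) (Fin n) ℂ) : E :=
  ∑ i, ∑ j, a j i • v i j

/-- `ν` is a matrix-norm on the complex vector space `E`: each `ν m` is a norm on
`M_m(E)`, and Axioms 1 and 2 of Effros/Ruan hold. -/
def IsMatrixNorm {E : Type} [AddCommGroup E] [Module ℂ E]
    (ν : ∀ m : ℕ, Matrix (Fin m) (Fin m) E → ℝ) : Prop :=
  (∀ (m : ℕ) (u v : Matrix (Fin m) (Fin m) E), ν m (u + v) ≤ ν m u + ν m v) ∧
  (∀ (m : ℕ) (c : ℂ) (u : Matrix (Fin m) (Fin m) E), ν m (c • u) = ‖c‖ * ν m u) ∧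
  (∀ (m : ℕ) (u : Matrix (Fin m) (Fin m) E), ν m u = 0 ↔ u = 0) ∧
  (∀ (m k : ℕ) (u : Matrix (Fin m) (Fin m) E),
      ν (m + k) (MatDSum u (0 : Matrix (Fin k) (Fin k) E)) = ν m u) ∧
  (∀ (m : ℕ) (S : Matrix (Fin m) (Fin m) ℂ) (u : Matrix (Fin m) (Fin m) E),
      ν m (scalLeft S u) ≤ opNorm S * ν m u) ∧
  (∀ (m : ℕ) (u : Matrix (Fin m) (Fin m) E) (S : Matrix (Fin m) (Fin m) ℂ),
      ν m (scalRight u S) ≤ ν m u * opNorm S)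

/-- The set of values `‖(φ^v)_m(u)‖_m` over all proper couples `(E, v)`, i.e. over all
matricially normed spaces `E` and all `v` in the closed unit ball of `M_n(E)`. -/
def hatNormSet (n : ℕ) {m : ℕ}
    (u : Matrix (Fin m) (Fin m) (Matrix (Fin n) (Fin n) ℂ)) : Set ℝ :=
  { r | ∃ (E : Type) (_ : AddCommGroup E) (_ : Module ℂ E)
        (ν : ∀ m' : ℕ, Matrix (Fin m') (Fin m') E → ℝ),
        IsMatrixNorm ν ∧
        ∃ v : Matrix (Fin n) (Fin n) E, ν n v ≤ 1 ∧ r = ν m (matAmpl (matPhi v) u) }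

/-- The matrix-norm of the matricially normed space `M̂_n`:
`‖u‖_m = sup { ‖(φ^v)_m(u)‖_m : (E, v) a proper couple }`. -/
noncomputable def hatNorm (n : ℕ) {m : ℕ}
    (u : Matrix (Fin m) (Fin m) (Matrix (Fin n) (Fin n) ℂ)) : ℝ :=
  sSup (hatNormSet n u)

/-- `φ` is a completely contractive (linear) operator between the matricially normed
spaces `(E, νE)` and `(F, νF)`: every amplification `φ_m` is contractive. -/
def IsCC {E F : Type} [AddCommGroup E] [Module ℂ E] [AddCommGroup F] [Module ℂ F]
    (νE : ∀ m : ℕ, Matrix (Fin m) (Fin m) E → ℝ)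
    (νF : ∀ m : ℕ, Matrix (Fin m) (Fin m) F → ℝ) (φ : E → F) : Prop :=
  IsLinearMap ℂ φ ∧
  ∀ (m : ℕ) (u : Matrix (Fin m) (Fin m) E), νF m (matAmpl φ u) ≤ νE m u

open DirectSum

/-- The `i`-th component matrix of a matrix with entries in a direct sum. -/
def compMat {ι : Type} {E : ι → Type} [∀ i, AddCommGroup (E i)] {m : ℕ}
    (u : Matrix (Fin m) (Fin m) (⨁ i, E i)) (i : ι) :
    Matrix (Fin m) (Fin m) (E i) :=
  Matrix.of fun a b => u a b i

/-- The matrix-norm of the matricial `ℓ¹`-sum of the family `(E i, ν i)`: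
`‖⊕_i u_i‖_m = Σ_i ‖u_i‖_m` (a finite sum, since only finitely many components of a
matrix over the algebraic direct sum are nonzero). -/
noncomputable def l1Norm {ι : Type} {E : ι → Type} [∀ i, AddCommGroup (E i)]
    (ν : ∀ i, ∀ m : ℕ, Matrix (Fin m) (Fin m) (E i) → ℝ)
    (m : ℕ) (u : Matrix (Fin m) (Fin m) (⨁ i, E i)) : ℝ :=
  ∑ᶠ i, ν i m (compMat u i)

/-- The underlying space of `M̂_∞`, the matricial `ℓ¹`-sum of the family
`(M̂_n)_{n ∈ ℕ}` (the index `k : ℕ` corresponds to the summand `M̂_{k+1}`). -/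
abbrev HatInf : Type := ⨁ k : ℕ, Matrix (Fin (k + 1)) (Fin (k + 1)) ℂ

/-- The matrix-norm of `M̂_∞`, i.e. of the matricial `ℓ¹`-sum of the `M̂_n`. -/
noncomputable def hatInfNorm : ∀ m : ℕ, Matrix (Fin m) (Fin m) HatInf → ℝ :=
  l1Norm (fun k m (u : Matrix (Fin m) (Fin m) (Matrix (Fin (k + 1)) (Fin (k + 1)) ℂ)) =>
    hatNorm (k + 1) u)

/-- The natural embedding `i_n : M̂_n → M̂_∞` (index `k` corresponds to `n = k+1`). -/
noncomputable def hatInfEmb (k : ℕ) :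
    Matrix (Fin (k + 1)) (Fin (k + 1)) ℂ →ₗ[ℂ] HatInf :=
  DirectSum.lof ℂ ℕ (fun k => Matrix (Fin (k + 1)) (Fin (k + 1)) ℂ) k


/-!
An operator out of the `ℓ¹`-sum `M̂_∞` is completely contractive exactly when its restrictions
to the summands `M̂_n` are, so everything reduces to a single `M̂_n`. There, every linear map
`φ : M_n → E` equals `φ^v` for `v = φ_n(g)`, where `g = (e_{ji})_{ij} ∈ M_n(M̂_n)`; since
`(φ^v)_n(g) = v`, the norm of `g` is at most `1`, so `‖v‖_n ≤ 1` whenever `φ` is completely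
contractive. Conversely `φ^v` is completely contractive for `‖v‖_n ≤ 1` by the very definition
of the norms of `M̂_n`; the supremum defining them is finite because the two axioms bound every
entry, `‖e_{ab} ⊗ v_{ij}‖_m ≤ ‖v‖_n`.
-/
theorem opNorm_single_one_le {m : ℕ} (i j : Fin m) : opNorm (Matrix.single i j (1 : ℂ)) ≤ 1 := by
  refine ContinuousLinearMap.opNorm_le_bound _ zero_le_one fun x => ?_
  have hx : LinearMap.toContinuousLinearMap (Matrix.toEuclideanLin (Matrix.single i j (1 : ℂ))) x
      = EuclideanSpace.single i (x j) := by
    ext a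
    simp [Matrix.single_mulVec, Function.update_apply]
  rw [hx, PiLp.norm_single, one_mul]
  exact PiLp.norm_apply_le x j

theorem DirectSum.toModule_apply_eq_sum {R ι N : Type*} [Semiring R] [DecidableEq ι]
    {M : ι → Type*} [∀ i, AddCommMonoid (M i)] [∀ i, Module R (M i)] [AddCommMonoid N] [Module R N]
    (φ : ∀ i, M i →ₗ[R] N) {x : ⨁ i, M i} (S : Finset ι) (hS : ∀ i ∉ S, x i = 0) :
    toModule R ι N φ x = ∑ i ∈ S, φ i (x i) := by
  classical
  rw [toModule, DFinsupp.lsum_apply_apply, DFinsupp.sumAddHom_apply, DFinsupp.sum]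
  refine Finset.sum_subset (fun i hi => ?_) (fun i _ hi => ?_)
  · by_contra hiS
    exact DFinsupp.mem_support_iff.1 hi (hS i hiS)
  · simp [DFinsupp.notMem_support_iff.1 hi]

theorem Matrix.fromBlocks_single_zero {l n α : Type*} [DecidableEq l] [DecidableEq n] [Zero α]
    (i j : l) (x : α) :
    Matrix.fromBlocks (Matrix.single i j x) 0 0 (0 : Matrix n n α) =
      Matrix.single (Sum.inl i) (Sum.inl j) x := by
  ext (p | p) (q | q) <;> simp [Matrix.single_apply]

theorem scalLeft_scalRight_single {E : Type} [AddCommGroup E] [Module ℂ E] {m : ℕ}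
    (i a b j : Fin m) (u : Matrix (Fin m) (Fin m) E) :
    scalLeft (Matrix.single i a 1) (scalRight u (Matrix.single b j 1)) =
      Matrix.single i j (u a b) := by
  ext p q
  simp [scalLeft, scalRight, Matrix.single_apply, ite_and, Finset.sum_ite_eq, eq_comm]
  split_ifs <;> rfl

namespace IsMatrixNorm

variable {E : Type} [AddCommGroup E] [Module ℂ E] {ν : ∀ m : ℕ, Matrix (Fin m) (Fin m) E → ℝ}

theorem add_le (h : IsMatrixNorm ν) {m : ℕ} (u v : Matrix (Fin m) (Fin m) E) :
    ν m (u + v) ≤ ν m u + ν m v :=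
  h.1 m u v

theorem smul_eq (h : IsMatrixNorm ν) {m : ℕ} (c : ℂ) (u : Matrix (Fin m) (Fin m) E) :
    ν m (c • u) = ‖c‖ * ν m u :=
  h.2.1 m c u

theorem matDSum_zero (h : IsMatrixNorm ν) {m : ℕ} (k : ℕ) (u : Matrix (Fin m) (Fin m) E) :
    ν (m + k) (MatDSum u (0 : Matrix (Fin k) (Fin k) E)) = ν m u :=
  h.2.2.2.1 m k u

theorem scalLeft_le (h : IsMatrixNorm ν) {m : ℕ} (S : Matrix (Fin m) (Fin m) ℂ)
    (u : Matrix (Fin m) (Fin m) E) : ν m (scalLeft S u) ≤ opNorm S * ν m u :=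
  h.2.2.2.2.1 m S u

theorem scalRight_le (h : IsMatrixNorm ν) {m : ℕ} (u : Matrix (Fin m) (Fin m) E)
    (S : Matrix (Fin m) (Fin m) ℂ) : ν m (scalRight u S) ≤ ν m u * opNorm S :=
  h.2.2.2.2.2 m u S

theorem map_zero (h : IsMatrixNorm ν) (m : ℕ) : ν m 0 = 0 :=
  (h.2.2.1 m 0).2 rfl

theorem nonneg (h : IsMatrixNorm ν) {m : ℕ} (u : Matrix (Fin m) (Fin m) E) : 0 ≤ ν m u := by
  have hneg : ν m (-u) = ν m u := by simpa using h.smul_eq (-1) u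
  have := h.add_le u (-u)
  rw [add_neg_cancel, h.map_zero, hneg] at this
  linarith

theorem sum_le (h : IsMatrixNorm ν) {m : ℕ} {ι : Type*} (s : Finset ι)
    (f : ι → Matrix (Fin m) (Fin m) E) : ν m (∑ i ∈ s, f i) ≤ ∑ i ∈ s, ν m (f i) := by
  classical
  induction s using Finset.induction_on with
  | empty => simp [h.map_zero]
  | insert a s ha ih =>
    rw [Finset.sum_insert ha, Finset.sum_insert ha]
    exact (h.add_le _ _).trans (by linarith)

theorem scalLeft_single_le (h : IsMatrixNorm ν) {m : ℕ} (i j : Fin m)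
    (u : Matrix (Fin m) (Fin m) E) : ν m (scalLeft (Matrix.single i j 1) u) ≤ ν m u :=
  (h.scalLeft_le _ u).trans <| mul_le_of_le_one_left (h.nonneg u) (opNorm_single_one_le i j)

theorem scalRight_single_le (h : IsMatrixNorm ν) {m : ℕ} (i j : Fin m)
    (u : Matrix (Fin m) (Fin m) E) : ν m (scalRight u (Matrix.single i j 1)) ≤ ν m u :=
  (h.scalRight_le u _).trans <| mul_le_of_le_one_right (h.nonneg u) (opNorm_single_one_le i j)


theorem single_le (h : IsMatrixNorm ν) {m : ℕ} (i j a b : Fin m)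
    (u : Matrix (Fin m) (Fin m) E) : ν m (Matrix.single i j (u a b)) ≤ ν m u := by
  rw [← scalLeft_scalRight_single i a b j]
  exact (h.scalLeft_single_le i a _).trans (h.scalRight_single_le b j u)

theorem single_le_single (h : IsMatrixNorm ν) {m : ℕ} (a b c d : Fin m) (x : E) :
    ν m (Matrix.single a b x) ≤ ν m (Matrix.single c d x) := by
  simpa using h.single_le a b c d (Matrix.single c d x)

theorem single_eq (h : IsMatrixNorm ν) {m : ℕ} (a b : Fin m) (x : E) :
    ν m (Matrix.single a b x) = ν 1 (Matrix.single (0 : Fin 1) 0 x) := by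
  obtain ⟨k, rfl⟩ : ∃ k, m = 1 + k := ⟨m - 1, by have := a.pos; omega⟩
  have hblock : MatDSum (Matrix.single (0 : Fin 1) 0 x) (0 : Matrix (Fin k) (Fin k) E) =
      Matrix.single (Fin.castAdd k 0) (Fin.castAdd k 0) x := by
    rw [MatDSum, Matrix.reindex_apply, Matrix.fromBlocks_single_zero,
      Matrix.submatrix_single_equiv]
    rfl
  rw [← h.matDSum_zero k (Matrix.single (0 : Fin 1) 0 x), hblock]
  exact le_antisymm (h.single_le_single ..) (h.single_le_single ..)

end IsMatrixNorm

section
variable {E : Type} [AddCommGroup E] [Module ℂ E]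

theorem matAmpl_matPhi_eq_sum {m n : ℕ} (v : Matrix (Fin n) (Fin n) E)
    (u : Matrix (Fin m) (Fin m) (Matrix (Fin n) (Fin n) ℂ)) :
    matAmpl (matPhi v) u = ∑ a, ∑ b, ∑ i, ∑ j, u a b j i • Matrix.single a b (v i j) := by
  ext p q
  simp [matAmpl, matPhi, Matrix.sum_apply, Matrix.single_apply, ite_and]

theorem IsMatrixNorm.matAmpl_matPhi_le {ν : ∀ m : ℕ, Matrix (Fin m) (Fin m) E → ℝ}
    (h : IsMatrixNorm ν) {m n : ℕ} (v : Matrix (Fin n) (Fin n) E)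
    (u : Matrix (Fin m) (Fin m) (Matrix (Fin n) (Fin n) ℂ)) :
    ν m (matAmpl (matPhi v) u) ≤ (∑ a, ∑ b, ∑ i, ∑ j, ‖u a b j i‖) * ν n v := by
  have hterm : ∀ a b i j, ν m (u a b j i • Matrix.single a b (v i j)) ≤ ‖u a b j i‖ * ν n v :=
    fun a b i j => by
      rw [h.smul_eq, h.single_eq, ← h.single_eq i j]
      exact mul_le_mul_of_nonneg_left (h.single_le i j i j v) (norm_nonneg _)
  simp only [matAmpl_matPhi_eq_sum, Finset.sum_mul]
  refine (h.sum_le _ _).trans <| Finset.sum_le_sum fun a _ => ?_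
  refine (h.sum_le _ _).trans <| Finset.sum_le_sum fun b _ => ?_
  refine (h.sum_le _ _).trans <| Finset.sum_le_sum fun i _ => ?_
  exact (h.sum_le _ _).trans <| Finset.sum_le_sum fun j _ => hterm a b i j

end

section
variable {E : Type} [AddCommGroup E] [Module ℂ E]

theorem hatNormSet_bddAbove (n : ℕ) {m : ℕ}
    (u : Matrix (Fin m) (Fin m) (Matrix (Fin n) (Fin n) ℂ)) : BddAbove (hatNormSet n u) := by
  refine ⟨∑ a, ∑ b, ∑ i, ∑ j, ‖u a b j i‖, ?_⟩
  rintro _ ⟨F, _, _, ν, hν, v, hv, rfl⟩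
  exact (hν.matAmpl_matPhi_le v u).trans (mul_le_of_le_one_right (by positivity) hv)

theorem IsMatrixNorm.le_hatNorm {ν : ∀ m : ℕ, Matrix (Fin m) (Fin m) E → ℝ} (h : IsMatrixNorm ν)
    {n m : ℕ} {v : Matrix (Fin n) (Fin n) E} (hv : ν n v ≤ 1)
    (u : Matrix (Fin m) (Fin m) (Matrix (Fin n) (Fin n) ℂ)) :
    ν m (matAmpl (matPhi v) u) ≤ hatNorm n u :=
  le_csSup (hatNormSet_bddAbove n u) ⟨E, _, _, ν, h, v, hv, rfl⟩

theorem hatNorm_zero (n m : ℕ) :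
    hatNorm n (0 : Matrix (Fin m) (Fin m) (Matrix (Fin n) (Fin n) ℂ)) = 0 := by
  have hmem : ∀ r ∈ hatNormSet n (0 : Matrix (Fin m) (Fin m) _), r = 0 := by
    rintro _ ⟨F, _, _, ν, hν, v, -, rfl⟩
    convert hν.map_zero m
    ext
    simp [matAmpl, matPhi]
  exact le_antisymm (Real.sSup_nonpos fun r hr => (hmem r hr).le)
    (Real.sSup_nonneg fun r hr => (hmem r hr).ge)

def matPhiLinear {n : ℕ} (v : Matrix (Fin n) (Fin n) E) : Matrix (Fin n) (Fin n) ℂ →ₗ[ℂ] E where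
  toFun := matPhi v
  map_add' a b := by simp [matPhi, add_smul, Finset.sum_add_distrib]
  map_smul' c a := by simp [matPhi, Finset.smul_sum, smul_smul]

theorem IsMatrixNorm.isCC_matPhi {ν : ∀ m : ℕ, Matrix (Fin m) (Fin m) E → ℝ}
    (h : IsMatrixNorm ν) {n : ℕ} {v : Matrix (Fin n) (Fin n) E} (hv : ν n v ≤ 1) :
    IsCC (fun _ u => hatNorm n u) ν (matPhiLinear v) :=
  ⟨(matPhiLinear v).isLinear, fun _ => h.le_hatNorm hv⟩

def hatGen (n : ℕ) : Matrix (Fin n) (Fin n) (Matrix (Fin n) (Fin n) ℂ) :=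
  Matrix.of fun i j => Matrix.single j i 1

theorem matAmpl_matPhi_hatGen {n : ℕ} (v : Matrix (Fin n) (Fin n) E) :
    matAmpl (matPhi v) (hatGen n) = v := by
  ext i j
  simp [matAmpl, matPhi, hatGen, Matrix.single_apply, ite_and]

theorem matPhi_matAmpl_hatGen {n : ℕ} (f : Matrix (Fin n) (Fin n) ℂ →ₗ[ℂ] E) :
    matPhi (matAmpl f (hatGen n)) = f := by
  ext a
  conv_rhs => rw [a.matrix_eq_sum_single]
  simp only [matPhi, matAmpl, hatGen, Matrix.of_apply, map_sum]
  rw [Finset.sum_comm]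
  refine Finset.sum_congr rfl fun i _ => Finset.sum_congr rfl fun j _ => ?_
  rw [← map_smul, Matrix.smul_single, smul_eq_mul, mul_one]

theorem hatNorm_hatGen_le_one (n : ℕ) : hatNorm n (hatGen n) ≤ 1 := by
  refine Real.sSup_le ?_ zero_le_one
  rintro _ ⟨F, _, _, ν, -, v, hv, rfl⟩
  rwa [matAmpl_matPhi_hatGen]

end

section
open DirectSum

variable {ι : Type} {E : ι → Type} [∀ i, AddCommGroup (E i)]
  {ν : ∀ i, ∀ m : ℕ, Matrix (Fin m) (Fin m) (E i) → ℝ}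

theorem exists_finset_compMat_eq_zero {m : ℕ} (u : Matrix (Fin m) (Fin m) (⨁ i, E i)) :
    ∃ S : Finset ι, ∀ i ∉ S, compMat u i = 0 := by
  classical
  refine ⟨Finset.univ.biUnion fun p : Fin m × Fin m => (u p.1 p.2).support, fun i hi => ?_⟩
  ext a b
  by_contra hab
  exact hi (Finset.mem_biUnion.2 ⟨(a, b), Finset.mem_univ _, DFinsupp.mem_support_iff.2 hab⟩)

theorem l1Norm_eq_sum (hν : ∀ i m, ν i m 0 = 0) {m : ℕ} (u : Matrix (Fin m) (Fin m) (⨁ i, E i))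
    (S : Finset ι) (hS : ∀ i ∉ S, compMat u i = 0) :
    l1Norm ν m u = ∑ i ∈ S, ν i m (compMat u i) := by
  refine finsum_eq_finsetSum_of_support_subset _ fun i hi => ?_
  by_contra hiS
  exact hi (by simp only [hS i hiS, hν])

variable [DecidableEq ι] [∀ i, Module ℂ (E i)]

theorem l1Norm_matAmpl_lof (hν : ∀ i m, ν i m 0 = 0) (i : ι) {m : ℕ}
    (u : Matrix (Fin m) (Fin m) (E i)) : l1Norm ν m (matAmpl (lof ℂ ι E i) u) = ν i m u := by
  have hother : ∀ j ∉ ({i} : Finset ι), compMat (matAmpl (lof ℂ ι E i) u) j = 0 :=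
    fun j hj => Matrix.ext fun a b =>
      of_eq_of_ne _ _ _ (Finset.notMem_singleton.1 hj)
  have hself : compMat (matAmpl (lof ℂ ι E i) u) i = u :=
    Matrix.ext fun a b => of_eq_same _ _
  rw [l1Norm_eq_sum hν _ {i} hother, Finset.sum_singleton, hself]

theorem matAmpl_toModule {F : Type} [AddCommGroup F] [Module ℂ F] (f : ∀ i, E i →ₗ[ℂ] F)
    {m : ℕ} (u : Matrix (Fin m) (Fin m) (⨁ i, E i)) (S : Finset ι)
    (hS : ∀ i ∉ S, compMat u i = 0) :
    matAmpl (toModule ℂ ι F f) u = ∑ i ∈ S, matAmpl (f i) (compMat u i) := by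
  ext a b
  simp only [matAmpl, Matrix.sum_apply, Matrix.of_apply, compMat]
  exact toModule_apply_eq_sum f S fun i hi => congrFun₂ (hS i hi) a b

theorem IsMatrixNorm.isCC_toModule {F : Type} [AddCommGroup F] [Module ℂ F]
    {νF : ∀ m : ℕ, Matrix (Fin m) (Fin m) F → ℝ} (hF : IsMatrixNorm νF)
    (hν : ∀ i m, ν i m 0 = 0) (f : ∀ i, E i →ₗ[ℂ] F) (hf : ∀ i, IsCC (ν i) νF (f i)) :
    IsCC (l1Norm ν) νF (toModule ℂ ι F f) := by
  refine ⟨(toModule ℂ ι F f).isLinear, fun m u => ?_⟩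
  obtain ⟨S, hS⟩ := exists_finset_compMat_eq_zero u
  calc νF m (matAmpl (toModule ℂ ι F f) u)
      = νF m (∑ i ∈ S, matAmpl (f i) (compMat u i)) := by rw [matAmpl_toModule f u S hS]
    _ ≤ ∑ i ∈ S, νF m (matAmpl (f i) (compMat u i)) := hF.sum_le _ _
    _ ≤ ∑ i ∈ S, ν i m (compMat u i) := Finset.sum_le_sum fun i _ => (hf i).2 m _
    _ = l1Norm ν m u := (l1Norm_eq_sum hν u S hS).symm

theorem IsCC.comp_lof {F : Type} [AddCommGroup F] [Module ℂ F]
    {νF : ∀ m : ℕ, Matrix (Fin m) (Fin m) F → ℝ} {ψ : (⨁ i, E i) → F}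
    (hψ : IsCC (l1Norm ν) νF ψ) (hν : ∀ i m, ν i m 0 = 0) (i : ι) :
    IsCC (ν i) νF (hψ.1.mk' ψ ∘ₗ lof ℂ ι E i) :=
  ⟨(hψ.1.mk' ψ ∘ₗ lof ℂ ι E i).isLinear, fun m u =>
    (hψ.2 m (matAmpl (lof ℂ ι E i) u)).trans (l1Norm_matAmpl_lof hν i u).le⟩

end

/-- **Theorem 3.** `M̂_∞` is the metrically free matricially normed space with a
one-point base: for every matricially normed space `(E, νE)`, the assignment sending a
sequence `w = (w_1, w_2, …)`, `w_n ∈ B_{M_n(E)}`, to the unique completely contractive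
operator `φ^w : M̂_∞ → E` with `φ^w ∘ i_n = φ^{w_n}` for all `n`, is a bijection from
`Π_n B_{M_n(E)}` onto the set of completely contractive operators `M̂_∞ → E`. -/
theorem hatInf_metrically_free (E : Type) [AddCommGroup E] [Module ℂ E]
    (νE : ∀ m : ℕ, Matrix (Fin m) (Fin m) E → ℝ) (hE : IsMatrixNorm νE) :
    (∀ w : ∀ k : ℕ, { v : Matrix (Fin (k + 1)) (Fin (k + 1)) E // νE (k + 1) v ≤ 1 },
      ∃! ψ : HatInf → E, IsCC hatInfNorm νE ψ ∧
        ∀ (k : ℕ) (a : Matrix (Fin (k + 1)) (Fin (k + 1)) ℂ),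
          ψ (hatInfEmb k a) = matPhi (w k).1 a) ∧
    (∀ ψ : HatInf → E, IsCC hatInfNorm νE ψ →
      ∃! w : ∀ k : ℕ, { v : Matrix (Fin (k + 1)) (Fin (k + 1)) E // νE (k + 1) v ≤ 1 },
        ∀ (k : ℕ) (a : Matrix (Fin (k + 1)) (Fin (k + 1)) ℂ),
          ψ (hatInfEmb k a) = matPhi (w k).1 a) := by
  have hν0 : ∀ k m, hatNorm (k + 1) (0 : Matrix (Fin m) (Fin m) (Matrix _ _ ℂ)) = 0 :=
    fun k m => hatNorm_zero (k + 1) m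
  refine ⟨fun w => ?_, fun ψ hψ => ?_⟩
  · let ψ₀ := DirectSum.toModule ℂ ℕ E fun k => matPhiLinear (w k).1
    have hψ₀ : ∀ k a, ψ₀ (hatInfEmb k a) = matPhi (w k).1 a := fun k a =>
      DirectSum.toModule_lof (M := fun k => Matrix (Fin (k + 1)) (Fin (k + 1)) ℂ) ℂ k a
    refine ⟨ψ₀, ⟨hE.isCC_toModule hν0 _ fun k => hE.isCC_matPhi (w k).2, hψ₀⟩, ?_⟩
    rintro ψ ⟨⟨hlin, -⟩, hψ⟩
    have hψψ₀ : hlin.mk' ψ = ψ₀ := DirectSum.linearMap_ext ℂ fun k =>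
      LinearMap.ext fun a => (hψ k a).trans (hψ₀ k a).symm
    exact congrArg DFunLike.coe hψψ₀
  · let ψₖ (k : ℕ) := hψ.1.mk' ψ ∘ₗ hatInfEmb k
    have hw : ∀ k, νE (k + 1) (matAmpl (ψₖ k) (hatGen (k + 1))) ≤ 1 := fun k =>
      ((hψ.comp_lof hν0 k).2 _ _).trans (hatNorm_hatGen_le_one _)
    refine ⟨fun k => ⟨_, hw k⟩, fun k a => ?_, fun w hw' => ?_⟩
    · exact (congrFun (matPhi_matAmpl_hatGen (ψₖ k)) a).symm
    · funext k
      refine Subtype.ext ?_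
      rw [← matAmpl_matPhi_hatGen (w k).1]
      exact congrArg (matAmpl · (hatGen (k + 1))) (funext (hw' k)).symm
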